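/- Fix an outcome ω ∈ X and infinite geodesics g_1 ≺ g_2 in T_0 eventually moving into H_i; let U denote the region between g_1 and g_2 in H_i. For each y ∈ Z^2, if Geo(0,y) contains a vertex z lying strictly in U (i.e., z ∈ U \ (g_1 ∪ g_2)), then Geo(0,y) ⊆ U ∪ g_1 ∪ g_2, and moreover all vertices of Geo(0,y) from z onward lie in U \ (g_1 ∪ g_2). -/

import Mathlib

open MeasureTheory Filter Topology
open scoped ENNReal NNReal

noncomputable section

/-! ## The planar lattice -/

/-- Vertices of the planar square lattice. -/
abbrev V : Type := ℤ × ℤ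

/-- The step corresponding to an edge direction: `true` ↦ horizontal, `false` ↦ vertical. -/
def dirStep : Bool → V
  | true => (1, 0)
  | false => (0, 1)

/-- Undirected nearest-neighbour edges of `ℤ²`, encoded by their lower endpoint together with
a direction. -/
abbrev Edge : Type := V × Bool

/-- The space of nonnegative edge-weight configurations, `Ω₁ = [0,∞)^{E²}`. -/
abbrev Omega1 : Type := Edge → ℝ≥0

/-- Configurations of directed nearest-neighbour edges, `Ω₂ = {0,1}^{directed edges}`. -/
abbrev Omega2 : Type := V → V → Bool

/-- Classical conversion of a proposition to a Boolean. -/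
def pbool (p : Prop) : Bool := @decide p (Classical.propDecidable p)

/-- The weight of the (undirected) edge between `x` and `y` (zero if not adjacent),
`ℝ≥0`-valued. -/
def wtN (ω : Omega1) (x y : V) : ℝ≥0 :=
  if y = x + dirStep true then ω (x, true)
  else if y = x + dirStep false then ω (x, false)
  else if x = y + dirStep true then ω (y, true)
  else if x = y + dirStep false then ω (y, false)
  else 0

/-- The weight of the edge between `x` and `y`, real-valued. -/
def wt (ω : Omega1) (x y : V) : ℝ := (wtN ω x y : ℝ)

/-- Nearest-neighbour adjacency in `ℤ²`. -/
def Adj (x y : V) : Prop :=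
  y = x + dirStep true ∨ y = x + dirStep false ∨
    x = y + dirStep true ∨ x = y + dirStep false

/-! ## Paths, passage times and geodesics -/

/-- `l` is a (finite) nearest-neighbour lattice path from `x` to `y`. -/
def IsPathFromTo (l : List V) (x y : V) : Prop :=
  l ≠ [] ∧ l.Chain' Adj ∧ l.head? = some x ∧ l.getLast? = some y

/-- The passage time `T(π) = Σ_{e∈π} ω_e` of a finite path. -/
def pathTime (ω : Omega1) : List V → ℝ
  | x :: y :: r => wt ω x y + pathTime ω (y :: r)
  | _ => 0

/-- The first-passage time `T(x,y)`: the infimum of passage times of lattice paths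
from `x` to `y`. -/
def Tdist (ω : Omega1) (x y : V) : ℝ :=
  sInf {t : ℝ | ∃ l : List V, IsPathFromTo l x y ∧ pathTime ω l = t}

/-- `l` is a geodesic from `x` to `y`. -/
def IsGeo (ω : Omega1) (l : List V) (x y : V) : Prop :=
  IsPathFromTo l x y ∧ pathTime ω l = Tdist ω x y

/-- An infinite nearest-neighbour path. -/
def IsInfPath (γ : ℕ → V) : Prop := ∀ n, Adj (γ n) (γ (n + 1))

/-- The initial segment `(γ 0, …, γ n)` of an infinite path, as a list. -/
def segList (γ : ℕ → V) (n : ℕ) : List V := (List.range (n + 1)).map γ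

/-- `γ` is an infinite geodesic: every finite initial segment is a geodesic. -/
def IsInfGeo (ω : Omega1) (γ : ℕ → V) : Prop :=
  IsInfPath γ ∧ ∀ n, IsGeo ω (segList γ n) (γ 0) (γ n)

/-- `x ∈ 𝒯_v`: the vertex `x` lies on some infinite geodesic starting at `v`. -/
def InTree (ω : Omega1) (v x : V) : Prop :=
  ∃ γ : ℕ → V, IsInfGeo ω γ ∧ γ 0 = v ∧ ∃ n, γ n = x

/-- Two infinite paths coalesce: they have equal terminal segments. -/
def Coalesce (γ γ' : ℕ → V) : Prop := ∃ i j : ℕ, ∀ n, γ (i + n) = γ' (j + n)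

/-- The Busemann function `B_g(y,z) = lim_k [T(y,g_k) - T(z,g_k)]` of an infinite geodesic
(defined via `limsup`, which agrees with the limit whenever the latter exists). -/
def busemann (ω : Omega1) (γ : ℕ → V) (y z : V) : ℝ :=
  Filter.limsup (fun k => Tdist ω y (γ k) - Tdist ω z (γ k)) Filter.atTop

/-! ## Euclidean geometry of the plane -/

/-- The embedding `ℤ² → ℝ²`. -/
def toR2 (x : V) : ℝ × ℝ := ((x.1 : ℝ), (x.2 : ℝ))

/-- The Euclidean norm of a lattice point. -/
def nrm (x : V) : ℝ := Real.sqrt ((x.1 : ℝ) ^ 2 + (x.2 : ℝ) ^ 2)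

/-- The Euclidean norm on `ℝ²`. -/
def nrm2 (x : ℝ × ℝ) : ℝ := Real.sqrt (x.1 ^ 2 + x.2 ^ 2)

/-- The Euclidean inner product on `ℝ²` (a linear functional identified with its gradient). -/
def dotp (ρ x : ℝ × ℝ) : ℝ := ρ.1 * x.1 + ρ.2 * x.2

/-- The translate `w + H` of a subset of the plane. -/
def trSet (w : ℝ × ℝ) (H : Set (ℝ × ℝ)) : Set (ℝ × ℝ) := {x | x - w ∈ H}

/-- The box `[-L,L]² ⊆ ℝ²`. -/
def boxR (L : ℝ) : Set (ℝ × ℝ) := {x | |x.1| ≤ L ∧ |x.2| ≤ L}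

/-- Minkowski sum of two subsets of the plane. -/
def msum (A B : Set (ℝ × ℝ)) : Set (ℝ × ℝ) := {x | ∃ a ∈ A, ∃ b ∈ B, x = a + b}

/-- The open half-plane `H_i = {x : (cos(iπ/4), sin(iπ/4))·x > 0}` (indexed mod 8). -/
def Hp (i : ℤ) : Set (ℝ × ℝ) :=
  {x | 0 < Real.cos (i * Real.pi / 4) * x.1 + Real.sin (i * Real.pi / 4) * x.2}

/-- `H_i + [-L,L]²` (Minkowski sum). -/
def msumHL (i : ℤ) (L : ℝ) : Set (ℝ × ℝ) := msum (Hp i) (boxR L)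

/-- The Busemann function of `γ` is asymptotically linear to the functional `ρ`:
`|B_γ(0,z) - ρ·z| / |z| → 0` as `|z| → ∞`. -/
def AsympLinear (ω : Omega1) (γ : ℕ → V) (ρ : ℝ × ℝ) : Prop :=
  Tendsto (fun z : V => |busemann ω γ 0 z - dotp ρ (toR2 z)| / nrm z)
    (comap nrm atTop) (𝓝 0)

/-- `Dir(γ)`: the set of limit points of `γ n / |γ n|` on the unit circle. -/
def DirSet (γ : ℕ → V) : Set (ℝ × ℝ) :=
  {x | nrm2 x = 1 ∧ MapClusterPt x atTop fun n => (nrm (γ n))⁻¹ • toR2 (γ n)}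

/-- `Arc(ρ) = {x ∈ S¹ : ρ·x = μ(x)}`. -/
def arcSet (mu : ℝ × ℝ → ℝ) (ρ : ℝ × ℝ) : Set (ℝ × ℝ) :=
  {x | nrm2 x = 1 ∧ dotp ρ x = mu x}

/-- `mu` is a norm on `ℝ²`. -/
def IsNorm2 (mu : ℝ × ℝ → ℝ) : Prop :=
  (∀ x y, mu (x + y) ≤ mu x + mu y) ∧ (∀ (c : ℝ) (x), mu (c • x) = |c| * mu x) ∧
    (∀ x, 0 ≤ mu x) ∧ ∀ x, mu x = 0 → x = 0

/-- `{x : ρ·x = 1}` is a supporting line of the unit ball `{μ ≤ 1}`. -/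
def IsSupporting (mu : ℝ × ℝ → ℝ) (ρ : ℝ × ℝ) : Prop :=
  (∀ x, mu x ≤ 1 → dotp ρ x ≤ 1) ∧ ∃ x, mu x = 1 ∧ dotp ρ x = 1

/-- `{x : ρ·x = 1}` is a supporting line of `{μ ≤ 1}` passing through the point `p`. -/
def IsSupportingAt (mu : ℝ × ℝ → ℝ) (ρ : ℝ × ℝ) (p : ℝ × ℝ) : Prop :=
  (∀ x, mu x ≤ 1 → dotp ρ x ≤ 1) ∧ dotp ρ p = 1

/-! ## Translations and lattice symmetries -/

/-- The translation `σ_z` acting on weight configurations: `(σ_z ω)_e = ω_{e-z}`. -/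
def shiftW (z : V) (ω : Omega1) : Omega1 := fun e => ω (e.1 - z, e.2)

/-- The pull-back of a weight configuration along a map of the lattice. -/
def pullbackW (g : V → V) (ω : Omega1) : Omega1 :=
  fun e => wtN ω (g e.1) (g (e.1 + dirStep e.2))

/-- A bijection of `ℤ²` preserving adjacency (these are exactly the compositions of
translations and the point symmetries of `ℤ²`). -/
def AdjAuto (g : V ≃ V) : Prop := ∀ x y, Adj x y ↔ Adj (g x) (g y)

/-- The translation `σ_z` acting on directed-edge configurations. -/
def shiftC (z : V) (η : Omega2) : Omega2 := fun x y => η (x - z) (y - z)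

/-- The translation `σ_z` acting on `Ω₁ × Ω₂`. -/
def sigmaZ (z : V) (p : Omega1 × Omega2) : Omega1 × Omega2 := (shiftW z p.1, shiftC z p.2)

/-! ## The assumptions A1 and A2 -/

/-- The set of undirected edges traversed by a finite path. -/
def pathEdgeSet (l : List V) : Set (Sym2 V) := {s | ∃ p ∈ l.zip l.tail, s = Sym2.mk p.1 p.2}

/-- The σ-algebra generated by the weights of all edges other than `e`. -/
def condSigma (e : Edge) : MeasurableSpace Omega1 :=
  MeasurableSpace.comap (fun (ω : Omega1) (f : {f : Edge // f ≠ e}) => ω f.1) inferInstance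

/-- The lattice box `[-n,n]²`. -/
def boxZ (n : ℕ) : Set V := {x | |x.1| ≤ (n : ℤ) ∧ |x.2| ≤ (n : ℤ)}

/-- The `ℓ^∞` norm of a lattice point. -/
def linfZ (x : V) : ℤ := max |x.1| |x.2|

/-- The number of edges of the path `l` whose weight exceeds `t`. -/
def countBig (ω : Omega1) (t : ℝ) (l : List V) : ℕ :=
  ((l.zip l.tail).map fun p => if t < wt ω p.1 p.2 then 1 else 0).sum

/-- `mu` is the time constant of `P`: for every `z`, `T(0,nz)/n → μ(z)` almost surely. -/
def IsTimeConstant (P : Measure Omega1) (mu : ℝ × ℝ → ℝ) : Prop :=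
  ∀ z : V, ∀ᵐ ω ∂P, Tendsto (fun n : ℕ => Tdist ω 0 (n • z) / n) atTop (𝓝 (mu (toR2 z)))

/-- Assumption **A1**: i.i.d. edge weights with a continuous common distribution satisfying
the Cox–Durrett moment condition. -/
structure A1 (P : Measure Omega1) : Prop where
  prob : IsProbabilityMeasure P
  iid : ∃ m0 : Measure ℝ≥0, IsProbabilityMeasure m0 ∧
      (∀ (s : Finset Edge) (B : Edge → Set ℝ≥0), (∀ e, MeasurableSet (B e)) →
        P {ω | ∀ e ∈ s, ω e ∈ B e} = ∏ e ∈ s, m0 (B e)) ∧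
      ∀ t : ℝ≥0, m0 {t} = 0
  moment : ∫⁻ ω : Omega1,
      (↑(min (min (ω ((0, 0), true)) (ω ((0, 0), false)))
          (min (ω ((-1, 0), true)) (ω ((0, -1), false)))) : ℝ≥0∞) ^ 2 ∂P < ⊤

/-- Assumption **A2**: the translation-ergodic assumption package of the paper. -/
structure A2 (P : Measure Omega1) : Prop where
  prob : IsProbabilityMeasure P
  stationary : ∀ z : V, MeasurePreserving (shiftW z) P P
  ergodic : ∀ A : Set Omega1, MeasurableSet A → (∀ z : V, shiftW z ⁻¹' A = A) →
      P A = 0 ∨ P A = 1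
  symmetric : ∀ g : V ≃ V, AdjAuto g → MeasurePreserving (pullbackW g) P P
  moment : ∃ d : ℝ, 0 < d ∧ ∀ e : Edge, ∫⁻ ω, (ω e : ℝ≥0∞) ^ ((2 : ℝ) + d) ∂P < ⊤
  boundedShape : ∃ mu : ℝ × ℝ → ℝ, IsTimeConstant P mu ∧ ∀ z : V, z ≠ 0 → 0 < mu (toR2 z)
  uniquePT : ∀ l l' : List V, l.Chain' Adj → l'.Chain' Adj →
      pathEdgeSet l ≠ pathEdgeSet l' → P {ω | pathTime ω l = pathTime ω l'} = 0
  upwardFE : ∀ (e : Edge) (lam : ℝ≥0), 0 < lam → 0 < P {ω | lam < ω e} →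
      ∀ᵐ ω ∂P, 0 < MeasureTheory.condExp (condSigma e) P
        (Set.indicator {ω' : Omega1 | lam < ω' e} fun _ => (1 : ℝ)) ω
  geoLength : ∃ L : ℝ, Tendsto (fun n : ℕ => P {ω | ∀ x ∈ boxZ n, ∀ y ∈ boxZ n,
      ∀ l, IsGeo ω l x y → (l.length : ℝ) ≤ L * n}) atTop (𝓝 1)
  largeWeights : ∃ t d g : ℝ, 0 < t ∧ 0 < d ∧ 0 < g ∧
      (∀ e : Edge, ∀ᵐ ω ∂P, d < MeasureTheory.condExp (condSigma e) P
        (Set.indicator {ω' : Omega1 | (ω' e : ℝ) < t - d} fun _ => (1 : ℝ)) ω) ∧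
      Tendsto (fun n : ℕ => P {ω | ∀ x y : V, linfZ x = (n : ℤ) → linfZ y = (2 * n : ℤ) →
        ∀ l, IsGeo ω l x y → g * (linfZ (x - y) : ℝ) < (countBig ω t l : ℝ)})
        atTop (𝓝 1)
/-! ## The almost sure event `𝒳`, half-plane orderings, regions -/

/-- The probability-one event `𝒳` (relative to the time constant `mu` and the set `C` of
attainable supporting functionals): unique passage times; existence of finite geodesics;
the shape theorem from every vertex; asymptotically linear Busemann functions with
functionals in `C`; and `Dir(g) ⊆ Arc(ρ_g)`. -/
def Xevent (mu : ℝ × ℝ → ℝ) (C : Set (ℝ × ℝ)) : Set Omega1 :=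
  {ω |
    (∀ l l' : List V, l.Chain' Adj → l'.Chain' Adj → pathEdgeSet l ≠ pathEdgeSet l' →
      pathTime ω l ≠ pathTime ω l') ∧
    (∀ x y : V, ∃ l, IsGeo ω l x y) ∧
    (∀ x : V, Tendsto (fun y : V => (Tdist ω x y - mu (toR2 (y - x))) / nrm y)
      (comap nrm atTop) (𝓝 0)) ∧
    (∀ γ : ℕ → V, IsInfGeo ω γ → ∃ ρ ∈ C, AsympLinear ω γ ρ) ∧
    ∀ γ : ℕ → V, IsInfGeo ω γ → ∀ ρ ∈ C, AsympLinear ω γ ρ → DirSet γ ⊆ arcSet mu ρ}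

/-- The integer normal vector of the half-plane `H_i`. -/
def mvec (i : ℤ) : V :=
  if i % 8 = 0 then (1, 0)
  else if i % 8 = 1 then (1, 1)
  else if i % 8 = 2 then (0, 1)
  else if i % 8 = 3 then (-1, 1)
  else if i % 8 = 4 then (-1, 0)
  else if i % 8 = 5 then (-1, -1)
  else if i % 8 = 6 then (0, -1)
  else (1, -1)

/-- The counterclockwise boundary direction of `H_i` (the rotation of `mvec i` by `π/2`). -/
def bvec (i : ℤ) : V := (-(mvec i).2, (mvec i).1)

/-- Integer dot product on `ℤ²`. -/
def idot (x y : V) : ℤ := x.1 * y.1 + x.2 * y.2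

/-- `γ k` is the last intersection of the path `γ` with the line `{x : m·x = c}`. -/
def IsLastHit (m : V) (c : ℤ) (γ : ℕ → V) (k : ℕ) : Prop :=
  idot m (γ k) = c ∧ ∀ j, k < j → idot m (γ j) ≠ c

/-- `γ ≺ γ'` in `H_i`: for all sufficiently far translates of `∂H_i`, the last intersection of
`γ` with the translate lies (weakly) counterclockwise of that of `γ'`. -/
def PrecIn (i : ℤ) (γ γ' : ℕ → V) : Prop :=
  ∃ N : ℤ, ∀ c : ℤ, N ≤ c → ∀ k k' : ℕ,
    IsLastHit (mvec i) c γ k → IsLastHit (mvec i) c γ' k' →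
      idot (bvec i) (γ' k') ≤ idot (bvec i) (γ k)

/-- The path `γ` eventually moves into the half-plane `H`: for every `z`, only finitely many
vertices of `γ` lie outside `z + H`. -/
def MovesInto (γ : ℕ → V) (H : Set (ℝ × ℝ)) : Prop :=
  ∀ z : V, {n : ℕ | toR2 (γ n) ∉ trSet (toR2 z) H}.Finite

/-- A family of paths uniformly moves into the half-plane `H`. -/
def UnifMovesInto (F : Set (ℕ → V)) (H : Set (ℝ × ℝ)) : Prop :=
  ∀ z : V, {x : V | (∃ γ ∈ F, ∃ n, γ n = x) ∧ toR2 x ∉ trSet (toR2 z) H}.Finite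

/-- The plane curve traced by the terminal segment of a lattice path from index `a` on. -/
def traceFrom (γ : ℕ → V) (a : ℕ) : Set (ℝ × ℝ) :=
  ⋃ n : ℕ, segment ℝ (toR2 (γ (a + n))) (toR2 (γ (a + n + 1)))

/-- `γ₁ a = γ₃ b` is the last intersection point of the paths `γ₁` and `γ₃`. -/
def LastCommon (γ₁ γ₃ : ℕ → V) (a b : ℕ) : Prop :=
  γ₁ a = γ₃ b ∧ ∀ n m : ℕ, γ₁ n = γ₃ m → n ≤ a ∧ m ≤ b

/-- `U` is the region between `γ₁` and `γ₃` in `H_i`: the union of the doubly infinite path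
formed by the terminal segments of `γ₁, γ₃` after their last common vertex together with the
connected component of its complement contained in a translate of `H_i` containing both paths. -/
def IsRegionBetween (i : ℤ) (γ₁ γ₃ : ℕ → V) (U : Set (ℝ × ℝ)) : Prop :=
  ∃ a b : ℕ, LastCommon γ₁ γ₃ a b ∧
    ∃ z : V, (∀ n, toR2 (γ₁ n) ∈ trSet (toR2 z) (Hp i)) ∧
      (∀ n, toR2 (γ₃ n) ∈ trSet (toR2 z) (Hp i)) ∧
      ∃ x : ℝ × ℝ, x ∉ traceFrom γ₁ a ∪ traceFrom γ₃ b ∧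
        connectedComponentIn (traceFrom γ₁ a ∪ traceFrom γ₃ b)ᶜ x ⊆ trSet (toR2 z) (Hp i) ∧
        U = traceFrom γ₁ a ∪ traceFrom γ₃ b ∪
          connectedComponentIn (traceFrom γ₁ a ∪ traceFrom γ₃ b)ᶜ x

/-- All but finitely many vertices of `γ` lie in `U`. -/
def EventuallyInSet (γ : ℕ → V) (U : Set (ℝ × ℝ)) : Prop :=
  {n : ℕ | toR2 (γ n) ∉ U}.Finite

/-! ## Convergence of geodesics -/

/-- The finite geodesics from `x` to `zs j` converge (in the sense of eventually coinciding
initial segments) to the infinite path `γ`. -/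
def GeodesicsConverge (ω : Omega1) (zs : ℕ → V) (x : V) (γ : ℕ → V) : Prop :=
  ∀ m : ℕ, ∃ j0 : ℕ, ∀ j, j0 ≤ j → ∃ l, IsGeo ω l x (zs j) ∧ l.take (m + 1) = segList γ m

/-- A sequence of infinite paths converges to `γ`: initial segments eventually coincide. -/
def PathSeqConverges (gs : ℕ → ℕ → V) (γ : ℕ → V) : Prop :=
  ∀ m : ℕ, ∃ k0 : ℕ, ∀ k, k0 ≤ k → ∀ j ≤ m, gs k j = γ j

/-! ## Random coalescing geodesics -/

/-- The configuration `η` encodes exactly the (directed) edges of the single infinite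
self-avoiding path `γ` starting at `z`. -/
def EncodesPathFrom (η : Omega2) (z : V) (γ : ℕ → V) : Prop :=
  γ 0 = z ∧ Function.Injective γ ∧ IsInfPath γ ∧
    ∀ x y : V, η x y = true ↔ ∃ n, x = γ n ∧ y = γ (n + 1)

/-- `G(z) = σ_{-z} ∘ G ∘ σ_z`. -/
def GAt (G : Omega1 → Omega2) (z : V) (ω : Omega1) : Omega2 :=
  shiftC z (G (shiftW (-z) ω))

/-- A random coalescing geodesic. -/
structure IsRCG (P : Measure Omega1) (G : Omega1 → Omega2) : Prop where
  meas : Measurable G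
  geo : ∀ z : V, ∀ᵐ ω ∂P, ∃ γ, EncodesPathFrom (GAt G z ω) z γ ∧ IsInfGeo ω γ
  coal : ∀ y z : V, ∀ᵐ ω ∂P, ∀ γ γ', EncodesPathFrom (GAt G y ω) y γ →
      EncodesPathFrom (GAt G z ω) z γ' → Coalesce γ γ'

/-! ## Measures on non-crossing geodesics -/

/-- `γ` is an infinite directed path in the graph encoded by `η`. -/
def DirPathIn (η : Omega2) (γ : ℕ → V) : Prop := ∀ n, η (γ n) (γ (n + 1)) = true

/-- A shift-invariant probability measure on non-crossing geodesics. -/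
structure IsNCGMeasure (P : Measure Omega1) (ν : Measure (Omega1 × Omega2)) : Prop where
  prob : IsProbabilityMeasure ν
  inv : ∀ z : V, MeasurePreserving (sigmaZ z) ν ν
  marg : ν.map Prod.fst = P
  notEmpty : ν {p | ∀ x y : V, p.2 x y = false} < 1
  graph : ∀ᵐ p ∂ν,
    (∀ x y : V, p.2 x y = true → Adj x y) ∧
    (∀ x : V, (∃! y, p.2 x y = true) ∨
      ((∀ y, p.2 x y = false) ∧ ∀ y, p.2 y x = false)) ∧
    (∀ (n : ℕ) (f : ℕ → V), 0 < n → (∀ i < n, p.2 (f i) (f (i + 1)) = true) → f n ≠ f 0) ∧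
    (∀ γ : ℕ → V, DirPathIn p.2 γ → IsInfGeo p.1 γ) ∧
    ∀ γ γ' : ℕ → V, DirPathIn p.2 γ → DirPathIn p.2 γ' →
      (∀ n m : ℕ, γ n ≠ γ' m) ∨ Coalesce γ γ'

/-- The graph encoded by `η` has infinitely many coalescence classes: arbitrarily large
families of pairwise non-coalescing infinite directed paths. -/
def InfManyClasses (η : Omega2) : Prop :=
  ∀ M : ℕ, ∃ f : Fin M → ℕ → V, (∀ a, DirPathIn η (f a)) ∧
    ∀ a b : Fin M, a ≠ b → ¬Coalesce (f a) (f b)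

/-- Undirected adjacency in the graph encoded by `η`. -/
def UndirAdjC (η : Omega2) (x y : V) : Prop := η x y = true ∨ η y x = true

/-- The graph encoded by `η` has no undirected cycles. -/
def NoUndirCycle (η : Omega2) : Prop :=
  ∀ (n : ℕ) (f : ℕ → V), 3 ≤ n → (∀ i j, i < n → j < n → i ≠ j → f i ≠ f j) →
    (∀ i < n, UndirAdjC η (f i) (f ((i + 1) % n))) → False

/-! ## Standing assumptions of Section 4 -/

/-- The standing hypotheses of Section 4 of the paper: `P` satisfies A1 or A2; `|v_k| → ∞`;
`v_k/|v_k| → v` with `v` a unit vector of argument in `[0, π/4]`; and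
`δ = lim_k P(0 ∈ 𝒯_{v_k}) > 0`. -/
structure Standing (P : Measure Omega1) (v : ℕ → V) (vR : ℝ × ℝ) (δ : ℝ) : Prop where
  base : A1 P ∨ A2 P
  toInf : Tendsto (fun k => nrm (v k)) atTop atTop
  unit : nrm2 vR = 1
  sector : 0 ≤ vR.2 ∧ vR.2 ≤ vR.1
  direction : Tendsto (fun k => (nrm (v k))⁻¹ • toR2 (v k)) atTop (𝓝 vR)
  deltaPos : 0 < δ
  deltaLim : Tendsto (fun k => P {ω | InTree ω (v k) 0}) atTop (𝓝 (ENNReal.ofReal δ))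

/-- `C` is the deterministic compact set such that, almost surely, the set of functionals to
which Busemann functions of geodesics in `𝒯₀` are asymptotically linear equals `C`. -/
def IsFunctionalSet (P : Measure Omega1) (C : Set (ℝ × ℝ)) : Prop :=
  IsCompact C ∧ ∀ᵐ ω ∂P,
    {ρ : ℝ × ℝ | ∃ γ : ℕ → V, IsInfGeo ω γ ∧ γ 0 = 0 ∧ AsympLinear ω γ ρ} = C

/-- The event `𝒟`: infinitely many `k` with `0 ∈ 𝒯_{v_k}`. -/
def Devent (v : ℕ → V) : Set Omega1 := {ω | {k : ℕ | InTree ω (v k) 0}.Infinite}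

/-- `γ` is a subsequential limit of the geodesics `Geo(0, v_{I(k)})`, where `I` enumerates
the indices `ℓ` with `0 ∈ 𝒯_{v_ℓ}`. -/
def IsSubseqGeoLimit (ω : Omega1) (v : ℕ → V) (γ : ℕ → V) : Prop :=
  ∃ φ : ℕ → ℕ, StrictMono φ ∧ (∀ j, InTree ω (v (φ j)) 0) ∧
    GeodesicsConverge ω (fun j => v (φ j)) 0 γ

/-- The family `Ξ_x(k)`: infinite geodesics from `x` that extend to infinite geodesics
from `x + w`. -/
def XiSet (ω : Omega1) (x w : V) : Set (ℕ → V) :=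
  {γ | IsInfGeo ω γ ∧ γ 0 = x ∧ ∃ γ' : ℕ → V, IsInfGeo ω γ' ∧ γ' 0 = x + w ∧
    ∃ s : ℕ, ∀ n, γ' (s + n) = γ n}

/-- The localization event of Lemma `hpfromvk`. -/
def LocEvent (v : ℕ → V) (i : ℤ) (L : ℝ) (k : ℕ) : Set Omega1 :=
  {ω | (∀ l, IsGeo ω l 0 (v k) → ∀ p ∈ l, toR2 p ∈ trSet (toR2 (v k)) (msumHL (i + 4) L)) ∧
    InTree ω (v k) 0 ∧
    UnifMovesInto (XiSet ω 0 (v k)) (Hp (i + 4)) ∧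
    ∀ γ ∈ XiSet ω 0 (v k), ∀ n, toR2 (γ n) ∈ msumHL (i + 4) L}

/-- The conclusion of Lemma `hpfromvk` for the half-plane index `i`. -/
def HpLocalized (P : Measure Omega1) (v : ℕ → V) (δ : ℝ) (i : ℤ) : Prop :=
  ∃ L0 : ℝ, ∀ L : ℝ, L0 ≤ L →
    ENNReal.ofReal (δ / 2) ≤ Filter.limsup (fun k => P (LocEvent v i L k)) atTop

/-! ## The good events and the measures ν and υ -/

/-- The lattice point `j·L·e₂`. -/
def e2L (L : ℕ) (j : ℤ) : V := ((0 : ℤ), j * (L : ℤ))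

/-- The event `Good_{k,L}(x)` (with the convention that the half-plane of Lemma `hpfromvk`
is `H_0`). -/
def GoodEvent (mu : ℝ × ℝ → ℝ) (C : Set (ℝ × ℝ)) (w : V) (L : ℝ) (x : V) : Set Omega1 :=
  Xevent mu C ∩
  {ω | InTree ω (x + w) x ∧
    (∀ l, IsGeo ω l x (x + w) → ∀ p ∈ l,
      toR2 p ∈ trSet (toR2 x) (Hp 0 ∪ boxR (L / 4)) ∧
      toR2 p ∈ trSet (toR2 (x + w)) (msumHL 4 (L / 4))) ∧
    (∀ γ ∈ XiSet ω x w, ∀ n, toR2 (γ n) ∈ trSet (toR2 x) (msumHL 4 (L / 4))) ∧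
    UnifMovesInto (XiSet ω x w) (Hp 4)}

/-- The event `Good*_{k,L}(x)`. -/
def GoodStar (mu : ℝ × ℝ → ℝ) (C : Set (ℝ × ℝ)) (w : V) (L : ℕ) (x : V) : Set Omega1 :=
  GoodEvent mu C w L x ∩ GoodEvent mu C w L (x + e2L L 1) ∩
  {ω | ∀ l l', IsGeo ω l x (x + w) → IsGeo ω l' (x + e2L L 1) (x + e2L L 1 + w) →
    ∀ p ∈ l, p ∉ l'}

/-- Assumption (raul seixas): `limsup_k P(Good*_{k,L}) > δ' > 0`. -/
def RaulSeixas (P : Measure Omega1) (mu : ℝ × ℝ → ℝ) (C : Set (ℝ × ℝ)) (v : ℕ → V)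
    (L : ℕ) : Prop :=
  ∃ d' : ℝ≥0∞, 0 < d' ∧ d' < Filter.limsup (fun k => P (GoodStar mu C (v k) L 0)) atTop

/-- The set `I_k(u)` of starting points of the geodesic family `ℱ_k(u)`. -/
def Iset (mu : ℝ × ℝ → ℝ) (C : Set (ℝ × ℝ)) (w : V) (L : ℕ) (u : V) (ω : Omega1) : Set V :=
  {x | (∃ j : ℤ, x = -u + e2L L j) ∧ ω ∈ GoodStar mu C w L x}

/-- The directed-edge configuration of the geodesic family `ℱ_k(u)`. -/
def etaNu (mu : ℝ × ℝ → ℝ) (C : Set (ℝ × ℝ)) (w : V) (L : ℕ) (ω : Omega1) (u : V) : Omega2 :=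
  fun x y =>
    pbool (∃ x0 ∈ Iset mu C w L u ω, ∃ l, IsGeo ω l x0 (x0 + w) ∧ (x, y) ∈ l.zip l.tail)

/-- The uniform probability measure on a finite set of lattice points. -/
def uniformOn (s : Finset V) : Measure V :=
  (s.card : ℝ≥0∞)⁻¹ • ∑ x ∈ s, Measure.dirac x

/-- The support `{1,…,w·e₁} × {1,…,L}` of the randomization variable `U_k`. -/
def suppNu (w : V) (L : ℕ) : Finset V :=
  Finset.Icc (1 : ℤ) w.1 ×ˢ Finset.Icc (1 : ℤ) (L : ℤ)

/-- The measure `ν_k`: the joint law of the weights and the directed-edge configuration of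
`ℱ_k(U_k)` with `U_k` uniform and independent of the weights. -/
def nuK (P : Measure Omega1) (mu : ℝ × ℝ → ℝ) (C : Set (ℝ × ℝ)) (w : V) (L : ℕ) :
    Measure (Omega1 × Omega2) :=
  (P.prod (uniformOn (suppNu w L))).map fun p => (p.1, etaNu mu C w L p.1 p.2)

/-- Weak convergence of measures on `Ω₁ × Ω₂` (tested against bounded continuous functions,
with the product topologies). -/
def IsWeakLimit (μs : ℕ → Measure (Omega1 × Omega2)) (μ : Measure (Omega1 × Omega2)) : Prop :=
  ∀ f : BoundedContinuousFunction (Omega1 × Omega2) ℝ,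
    Tendsto (fun m => ∫ p, f p ∂(μs m)) atTop (𝓝 (∫ p, f p ∂μ))

open scoped Classical in
/-- The counterclockwisemost element `Γ_k(x)` of `Ξ_x(k)` in the half-plane `H_4`,
defined on `Good_{k,L}(x)` (and `none` otherwise). -/
def GammaSel (mu : ℝ × ℝ → ℝ) (C : Set (ℝ × ℝ)) (w : V) (L : ℕ) (x : V) (ω : Omega1) :
    Option (ℕ → V) :=
  if h : ω ∈ GoodEvent mu C w L x ∧
      ∃ γ ∈ XiSet ω x w, ∀ γ' ∈ XiSet ω x w, PrecIn 4 γ γ'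
  then some h.2.choose else none

/-- The geodesic family `𝔊_k(u) = {Γ_k(u + ℓLe₂) : -4k ≤ ℓ ≤ 4k}`. -/
def GSet (mu : ℝ × ℝ → ℝ) (C : Set (ℝ × ℝ)) (w : V) (L : ℕ) (k : ℕ) (u : V) (ω : Omega1) :
    Set (ℕ → V) :=
  {γ | ∃ j : ℤ, -(4 * (k : ℤ)) ≤ j ∧ j ≤ 4 * (k : ℤ) ∧
    GammaSel mu C w L (u + e2L L j) ω = some γ}

/-- The event `N_k(u)`: two distinct elements of `𝔊_k(u)` intersect. -/
def Nevent (mu : ℝ × ℝ → ℝ) (C : Set (ℝ × ℝ)) (v : ℕ → V) (L : ℕ) (k : ℕ) (u : V) :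
    Set Omega1 :=
  {ω | ∃ γ₁ ∈ GSet mu C (v k) L k u ω, ∃ γ₂ ∈ GSet mu C (v k) L k u ω,
    γ₁ ≠ γ₂ ∧ ∃ n m : ℕ, γ₁ n = γ₂ m}

/-- The event `Good°_{k,L}(x,y)`. -/
def GoodCirc (mu : ℝ × ℝ → ℝ) (C : Set (ℝ × ℝ)) (w : V) (L : ℝ) (x y : V) : Set Omega1 :=
  GoodEvent mu C w L x ∩ GoodEvent mu C w L y ∩
  {ω | ∃ l l', IsGeo ω l x (x + w) ∧ IsGeo ω l' y (y + w) ∧ ∃ p, p ∈ l ∧ p ∈ l'}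

/-- The thinning condition: along the (sub)sequence `(v_k)`,
`P(Good° | Good ∩ Good) ≥ 1 - 1/k³` uniformly over `-4k ≤ ℓ₁, ℓ₂ ≤ 4k`. -/
def ThinHyp (P : Measure Omega1) (mu : ℝ × ℝ → ℝ) (C : Set (ℝ × ℝ)) (v : ℕ → V)
    (L : ℕ) : Prop :=
  ∀ k : ℕ, ∀ j₁ j₂ : ℤ, -(4 * (k : ℤ)) ≤ j₁ → j₁ ≤ 4 * (k : ℤ) →
    -(4 * (k : ℤ)) ≤ j₂ → j₂ ≤ 4 * (k : ℤ) →
    (1 - ((k : ℝ≥0∞) ^ 3)⁻¹) *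
        P (GoodEvent mu C (v k) L (e2L L j₁) ∩ GoodEvent mu C (v k) L (e2L L j₂)) ≤
      P (GoodCirc mu C (v k) L (e2L L j₁) (e2L L j₂))

/-- Assumption (raul2), the negation of (raul seixas): for every `ℓ ≥ L`, the conditional
probability of `Good°_{k,L}(0, ℓe₂)` given `Good_{k,L}(0) ∩ Good_{k,L}(ℓe₂)` tends to `1`. -/
def Raul2Hyp (P : Measure Omega1) (mu : ℝ × ℝ → ℝ) (C : Set (ℝ × ℝ)) (v : ℕ → V)
    (L : ℕ) : Prop :=
  ∀ ℓ : ℤ, (L : ℤ) ≤ ℓ → ∀ ε : ℝ≥0∞, 0 < ε → ε < 1 →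
    ∀ᶠ k in atTop, (1 - ε) *
        P (GoodEvent mu C (v k) L 0 ∩ GoodEvent mu C (v k) L ((0 : ℤ), ℓ)) ≤
      P (GoodCirc mu C (v k) L 0 ((0 : ℤ), ℓ))

/-- The directed-edge configuration of the geodesic family `𝔊_k(u)`. -/
def etaUps (mu : ℝ × ℝ → ℝ) (C : Set (ℝ × ℝ)) (w : V) (L k : ℕ) (ω : Omega1) (u : V) :
    Omega2 :=
  fun x y => pbool (∃ γ ∈ GSet mu C w L k u ω, ∃ n, γ n = x ∧ γ (n + 1) = y)

/-- The support `{0,…,⌊δk/32⌋} × {-kL,…,kL}` of the randomization variable for `υ_k`. -/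
def suppUps (δ : ℝ) (k L : ℕ) : Finset V :=
  Finset.Icc (0 : ℤ) ⌊δ * k / 32⌋ ×ˢ Finset.Icc (-(k * L : ℤ)) ((k * L : ℤ))

/-- The measure `υ_k`. -/
def upsK (P : Measure Omega1) (mu : ℝ × ℝ → ℝ) (C : Set (ℝ × ℝ)) (v : ℕ → V) (δ : ℝ)
    (L : ℕ) (k : ℕ) : Measure (Omega1 × Omega2) :=
  (P.prod (uniformOn (suppUps δ k L))).map fun p => (p.1, etaUps mu C (v k) L k p.1 p.2)

/-! ## Highway arcs -/

/-- `e` is a highway arc: it is traversed by the geodesic `Geo(0,z)` for infinitely many `z`. -/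
def IsHighwayArc (ω : Omega1) (e : Edge) : Prop :=
  {z : V | ∃ l, IsGeo ω l 0 z ∧
    ((e.1, e.1 + dirStep e.2) ∈ l.zip l.tail ∨
      (e.1 + dirStep e.2, e.1) ∈ l.zip l.tail)}.Infinite

/-- The set of highway arcs intersecting the circle of radius `r` about the origin
(whose cardinality is `f_r`). -/
def frSet (ω : Omega1) (r : ℝ) : Set Edge :=
  {e | IsHighwayArc ω e ∧
    ∃ p ∈ segment ℝ (toR2 e.1) (toR2 (e.1 + dirStep e.2)), nrm2 p = r}
/-!
A finite geodesic from `0` that meets an infinite geodesic `γ` from `0` coincides with `γ` up to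
that point, by uniqueness of geodesics. Hence the vertices of `Geo(0,y)` lying on `γ₁ ∪ γ₂` form
an initial segment, and the remaining vertices form a lattice path avoiding both geodesics. Two
unit lattice segments can only meet at a common endpoint, so this path never touches the traces
of `γ₁` and `γ₂` and stays in one connected component of their complement; if one of its
vertices lies in `U`, that component is the one defining `U`.
-/

def HasUniquePassageTimes (ω : Omega1) : Prop :=
  ∀ l l' : List V, l.IsChain Adj → l'.IsChain Adj → pathEdgeSet l ≠ pathEdgeSet l' →
    pathTime ω l ≠ pathTime ω l'

lemma List.exists_append_of_prefix_closed {α : Type*} (Q : α → Prop) :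
    ∀ l : List α, (∀ s v t, l = s ++ v :: t → Q v → ∀ w ∈ s, Q w) →
      ∃ s t, l = s ++ t ∧ (∀ w ∈ s, Q w) ∧ ∀ w ∈ t, ¬ Q w
  | [], _ => ⟨[], [], rfl, by simp, by simp⟩
  | a :: l, hQ => by
    by_cases ha : Q a
    · obtain ⟨s, t, rfl, hs, ht⟩ := List.exists_append_of_prefix_closed Q l
        fun s v t hl hv w hw => hQ (a :: s) v t (by simp [hl]) hv w (List.mem_cons_of_mem a hw)
      exact ⟨a :: s, t, rfl, by simpa [ha] using hs, ht⟩
    · refine ⟨[], a :: l, rfl, by simp, fun w hw hw' => ?_⟩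
      rcases List.mem_cons.mp hw with rfl | hw
      · exact ha hw'
      · obtain ⟨s, t, rfl⟩ := List.append_of_mem hw
        exact ha (hQ (a :: s) w t rfl hw' a List.mem_cons_self)

lemma List.IsChain.apply_eq_apply {α β : Type*} {R : α → α → Prop} {f : α → β}
    (hR : ∀ a b, R a b → f a = f b) {l : List α} (hl : l.IsChain R) {a b : α}
    (ha : a ∈ l) (hb : b ∈ l) : f a = f b := by
  have hne : l ≠ [] := List.ne_nil_of_mem ha
  have key := hl.induction (fun x => f x = f (l.head hne)) l
    (fun x y hxy hx => (hR x y hxy).symm.trans hx) fun _ => rfl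
  exact (key a ha).trans (key b hb).symm

section Geodesics

variable {ω : Omega1}

lemma pathTime_nonneg (ω : Omega1) : ∀ l : List V, 0 ≤ pathTime ω l
  | [] => le_rfl
  | [_] => le_rfl
  | x :: y :: r => add_nonneg (wtN ω x y).coe_nonneg (pathTime_nonneg ω (y :: r))

lemma pathTime_append_cons (ω : Omega1) : ∀ (s : List V) (v : V) (t : List V),
    pathTime ω (s ++ v :: t) = pathTime ω (s ++ [v]) + pathTime ω (v :: t)
  | [], v, t => by simp [pathTime]
  | [a], v, t => by simp [pathTime]
  | a :: b :: s, v, t => by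
    have ih := pathTime_append_cons ω (b :: s) v t
    simp only [List.cons_append] at ih ⊢
    simp only [pathTime, ih]
    ring

lemma Tdist_le_pathTime (ω : Omega1) {l : List V} {x y : V} (h : IsPathFromTo l x y) :
    Tdist ω x y ≤ pathTime ω l :=
  csInf_le ⟨0, by rintro _ ⟨l', -, rfl⟩; exact pathTime_nonneg ω l'⟩ ⟨l, h, rfl⟩

lemma IsPathFromTo.append {s t : List V} {x v y : V} (hs : IsPathFromTo (s ++ [v]) x v)
    (ht : IsPathFromTo (v :: t) v y) : IsPathFromTo (s ++ v :: t) x y := by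
  refine ⟨by simp, ?_, ?_, ?_⟩
  · exact (by simpa using hs.2.1.append_overlap ht.2.1 (List.cons_ne_nil v []) :
      (s ++ v :: t).IsChain Adj)
  · rw [← hs.2.2.1]
    cases s <;> simp
  · rw [← ht.2.2.2, List.getLast?_append_cons]

lemma IsPathFromTo.split {s t : List V} {x v y : V} (h : IsPathFromTo (s ++ v :: t) x y) :
    IsPathFromTo (s ++ [v]) x v ∧ IsPathFromTo (v :: t) v y := by
  refine ⟨⟨by simp, h.2.1.infix ?_, ?_, by simp⟩, ⟨by simp, h.2.1.infix ?_, rfl, ?_⟩⟩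
  · exact ⟨[], t, by simp⟩
  · rw [← h.2.2.1]
    cases s <;> simp
  · exact (List.suffix_append s (v :: t)).isInfix
  · rw [← h.2.2.2, List.getLast?_append_cons]

lemma IsGeo.prefix {s t : List V} {x v y : V} (h : IsGeo ω (s ++ v :: t) x y) :
    IsGeo ω (s ++ [v]) x v := by
  obtain ⟨hs, ht⟩ := h.1.split
  refine ⟨hs, le_antisymm ?_ (Tdist_le_pathTime ω hs)⟩
  refine le_csInf ⟨_, _, hs, rfl⟩ ?_
  rintro _ ⟨p, hp, rfl⟩
  obtain ⟨p, rfl⟩ := List.getLast?_eq_some_iff.mp hp.2.2.2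
  have := Tdist_le_pathTime ω (hp.append ht)
  rw [← h.2, pathTime_append_cons ω s v t, pathTime_append_cons ω p v t] at this
  linarith

lemma pathEdgeSet_cons (x y : V) (t : List V) :
    pathEdgeSet (x :: y :: t) = insert s(x, y) (pathEdgeSet (y :: t)) := by
  ext e
  simp only [pathEdgeSet, List.tail_cons, List.zip_cons_cons, List.mem_cons, Set.mem_ofPred_eq,
    Set.mem_insert_iff]
  constructor
  · rintro ⟨p, rfl | hp, rfl⟩
    exacts [Or.inl rfl, Or.inr ⟨p, hp, rfl⟩]
  · rintro (rfl | ⟨p, hp, rfl⟩)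
    exacts [⟨(x, y), Or.inl rfl, rfl⟩, ⟨p, Or.inr hp, rfl⟩]

lemma mem_of_mem_pathEdgeSet {l : List V} {e : Sym2 V} {v : V} (he : e ∈ pathEdgeSet l)
    (hv : v ∈ e) : v ∈ l := by
  obtain ⟨p, hp, rfl⟩ := he
  rcases Sym2.mem_iff.mp hv with rfl | rfl
  · exact (List.of_mem_zip hp).1
  · exact List.mem_of_mem_tail (List.of_mem_zip hp).2

lemma exists_mem_pathEdgeSet_of_mem (x : V) :
    ∀ {r : List V} {v : V}, v ∈ r → ∃ e ∈ pathEdgeSet (x :: r), v ∈ e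
  | y :: r, v, hv => by
    rw [pathEdgeSet_cons]
    rcases List.mem_cons.mp hv with rfl | hv
    · exact ⟨s(x, v), Set.mem_insert _ _, Sym2.mem_mk_right _ _⟩
    · obtain ⟨e, he, hve⟩ := exists_mem_pathEdgeSet_of_mem y hv
      exact ⟨e, Set.mem_insert_of_mem _ he, hve⟩

lemma mem_of_pathEdgeSet_eq {l l' : List V} (hE : pathEdgeSet l = pathEdgeSet l')
    (hhead : l.head? = l'.head?) {v : V} (hv : v ∈ l) : v ∈ l' := by
  cases l with
  | nil => simp at hv
  | cons x r =>
    rcases List.mem_cons.mp hv with rfl | hv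
    · exact List.mem_of_mem_head? (hhead ▸ rfl)
    · obtain ⟨e, he, hve⟩ := exists_mem_pathEdgeSet_of_mem x hv
      exact mem_of_mem_pathEdgeSet (hE ▸ he) hve

/-- Both `s ++ [v]` and the initial segment of `γ` up to `v` are geodesics from `γ 0` to `v`;
with unique passage times they have the same edges, hence the same vertices. -/
lemma IsGeo.prefix_subset_range (huniq : HasUniquePassageTimes ω) {γ : ℕ → V}
    (hγ : IsInfGeo ω γ) {s t : List V} {v y : V} (hl : IsGeo ω (s ++ v :: t) (γ 0) y)
    (hv : v ∈ Set.range γ) : ∀ w ∈ s, w ∈ Set.range γ := by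
  obtain ⟨j, rfl⟩ := hv
  have hpre := hl.prefix
  have hseg := hγ.2 j
  have hE : pathEdgeSet (s ++ [γ j]) = pathEdgeSet (segList γ j) := by
    by_contra hne
    exact huniq _ _ hpre.1.2.1 hseg.1.2.1 hne (hpre.2.trans hseg.2.symm)
  intro w hw
  have hw' := mem_of_pathEdgeSet_eq hE (hpre.1.2.2.1.trans hseg.1.2.2.1.symm)
    (List.mem_append_left _ hw)
  obtain ⟨n, -, rfl⟩ := List.mem_map.mp hw'
  exact ⟨n, rfl⟩

lemma IsGeo.exists_append_mem_range_not_mem_range (huniq : HasUniquePassageTimes ω)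
    {γ₁ γ₂ : ℕ → V} (h1 : IsInfGeo ω γ₁) (h2 : IsInfGeo ω γ₂) (h12 : γ₁ 0 = γ₂ 0)
    {l : List V} {y : V} (hl : IsGeo ω l (γ₁ 0) y) :
    ∃ s t, l = s ++ t ∧ (∀ v ∈ s, v ∈ Set.range γ₁ ∨ v ∈ Set.range γ₂) ∧
      ∀ v ∈ t, v ∉ Set.range γ₁ ∧ v ∉ Set.range γ₂ := by
  obtain ⟨s, t, hst, hs, ht⟩ :=
    List.exists_append_of_prefix_closed (fun v => v ∈ Set.range γ₁ ∨ v ∈ Set.range γ₂) l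
      (by
        rintro s v t rfl (hv | hv) w hw
        · exact Or.inl (hl.prefix_subset_range huniq h1 hv w hw)
        · exact Or.inr ((h12 ▸ hl).prefix_subset_range huniq h2 hv w hw))
  exact ⟨s, t, hst, hs, fun v hv => not_or.mp (ht v hv)⟩

end Geodesics

section LatticeSegments

lemma mem_uIcc_of_mem_segment {x a b : ℝ × ℝ} (h : x ∈ segment ℝ a b) :
    x.1 ∈ Set.uIcc a.1 b.1 ∧ x.2 ∈ Set.uIcc a.2 b.2 := by
  obtain ⟨s, t, hs, ht, hst, rfl⟩ := h
  rw [← segment_eq_uIcc, ← segment_eq_uIcc]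
  exact ⟨⟨s, t, hs, ht, hst, rfl⟩, ⟨s, t, hs, ht, hst, rfl⟩⟩

lemma min_le_max_of_mem_segment {p q u w : V} {x : ℝ × ℝ}
    (hx : x ∈ segment ℝ (toR2 p) (toR2 q)) (hx' : x ∈ segment ℝ (toR2 u) (toR2 w)) :
    min p.1 q.1 ≤ max u.1 w.1 ∧ min p.2 q.2 ≤ max u.2 w.2 := by
  obtain ⟨h1, h2⟩ := mem_uIcc_of_mem_segment hx
  obtain ⟨h1', h2'⟩ := mem_uIcc_of_mem_segment hx'
  simp only [toR2, Set.uIcc, Set.mem_Icc] at *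
  constructor
  · exact_mod_cast h1.1.trans h1'.2
  · exact_mod_cast h2.1.trans h2'.2

lemma eq_or_eq_of_toR2_mem_segment {p u w : V} (huw : Adj u w)
    (h : toR2 p ∈ segment ℝ (toR2 u) (toR2 w)) : p = u ∨ p = w := by
  have hp := left_mem_segment ℝ (toR2 p) (toR2 p)
  have h₁ := min_le_max_of_mem_segment hp h
  have h₂ := min_le_max_of_mem_segment h hp
  simp only [Adj, dirStep, Prod.ext_iff, Prod.fst_add, Prod.snd_add] at huw ⊢
  omega

/-- For unit lattice segments, overlapping bounding boxes already force a common endpoint. -/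
lemma eq_of_adj_of_mem_segment_of_mem_segment {p q u w : V} {x : ℝ × ℝ} (hpq : Adj p q)
    (huw : Adj u w) (hx : x ∈ segment ℝ (toR2 p) (toR2 q))
    (hx' : x ∈ segment ℝ (toR2 u) (toR2 w)) : p = u ∨ p = w ∨ q = u ∨ q = w := by
  have h₁ := min_le_max_of_mem_segment hx hx'
  have h₂ := min_le_max_of_mem_segment hx' hx
  simp only [Adj, dirStep, Prod.ext_iff, Prod.fst_add, Prod.snd_add] at hpq huw ⊢
  omega

variable {γ : ℕ → V}

lemma mem_range_of_toR2_mem_traceFrom (hγ : IsInfPath γ) {a : ℕ} {p : V}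
    (h : toR2 p ∈ traceFrom γ a) : p ∈ Set.range γ := by
  obtain ⟨n, hn⟩ := Set.mem_iUnion.mp h
  rcases eq_or_eq_of_toR2_mem_segment (hγ (a + n)) hn with rfl | rfl
  exacts [⟨_, rfl⟩, ⟨_, rfl⟩]

lemma segment_subset_compl_traceFrom (hγ : IsInfPath γ) {p q : V} (hpq : Adj p q)
    (hp : p ∉ Set.range γ) (hq : q ∉ Set.range γ) (a : ℕ) :
    segment ℝ (toR2 p) (toR2 q) ⊆ (traceFrom γ a)ᶜ := by
  intro x hx hx'
  obtain ⟨n, hn⟩ := Set.mem_iUnion.mp hx'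
  rcases eq_of_adj_of_mem_segment_of_mem_segment hpq (hγ (a + n)) hx hn with h | h | h | h
  exacts [hp ⟨_, h.symm⟩, hp ⟨_, h.symm⟩, hq ⟨_, h.symm⟩, hq ⟨_, h.symm⟩]

lemma connectedComponentIn_eq_of_segment_subset {E : Type*} [AddCommGroup E] [Module ℝ E]
    [TopologicalSpace E] [ContinuousAdd E] [ContinuousSMul ℝ E] {F : Set E} {a b : E}
    (h : segment ℝ a b ⊆ F) : connectedComponentIn F a = connectedComponentIn F b :=
  connectedComponentIn_eq <| (convex_segment a b).isPreconnected.subset_connectedComponentIn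
    (left_mem_segment ℝ a b) h (right_mem_segment ℝ a b)

variable {γ₁ γ₂ : ℕ → V} (h1 : IsInfPath γ₁) (h2 : IsInfPath γ₂) (a b : ℕ)
include h1 h2

lemma toR2_mem_compl_traceFrom_union {v : V} (hv₁ : v ∉ Set.range γ₁)
    (hv₂ : v ∉ Set.range γ₂) : toR2 v ∈ (traceFrom γ₁ a ∪ traceFrom γ₂ b)ᶜ := by
  rintro (hv | hv)
  exacts [hv₁ (mem_range_of_toR2_mem_traceFrom h1 hv),
    hv₂ (mem_range_of_toR2_mem_traceFrom h2 hv)]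

lemma connectedComponentIn_eq_of_isChain {t : List V} (ht : t.IsChain Adj)
    (hoff : ∀ v ∈ t, v ∉ Set.range γ₁ ∧ v ∉ Set.range γ₂) {v w : V} (hv : v ∈ t)
    (hw : w ∈ t) :
    connectedComponentIn (traceFrom γ₁ a ∪ traceFrom γ₂ b)ᶜ (toR2 v) =
      connectedComponentIn (traceFrom γ₁ a ∪ traceFrom γ₂ b)ᶜ (toR2 w) := by
  refine (List.IsChain.iff_mem.mp ht).apply_eq_apply
    (f := fun v => connectedComponentIn _ (toR2 v)) (fun p q ⟨hp, hq, hpq⟩ => ?_) hv hw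
  refine connectedComponentIn_eq_of_segment_subset fun x hx => ?_
  rw [Set.compl_union]
  exact ⟨segment_subset_compl_traceFrom h1 hpq (hoff p hp).1 (hoff q hq).1 a hx,
    segment_subset_compl_traceFrom h2 hpq (hoff p hp).2 (hoff q hq).2 b hx⟩

end LatticeSegments

theorem finite_geodesic_trapped_in_region_general (mu : ℝ × ℝ → ℝ)
    (C : Set (ℝ × ℝ))
    (ω : Omega1) (hω : ω ∈ Xevent mu C) (i : ℤ) (γ₁ γ₂ : ℕ → V)
    (h1 : IsInfGeo ω γ₁) (h10 : γ₁ 0 = 0) (h2 : IsInfGeo ω γ₂) (h20 : γ₂ 0 = 0)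
    (U : Set (ℝ × ℝ)) (hU : IsRegionBetween i γ₁ γ₂ U)
    (y : V) (l : List V) (hl : IsGeo ω l 0 y)
    (hz : ∃ p ∈ l, toR2 p ∈ U ∧ p ∉ Set.range γ₁ ∧ p ∉ Set.range γ₂) :
    (∀ p ∈ l, toR2 p ∈ U ∨ p ∈ Set.range γ₁ ∨ p ∈ Set.range γ₂) ∧
    ∀ (n m : ℕ) (hn : n < l.length) (hm : m < l.length),
      (toR2 (l.get ⟨n, hn⟩) ∈ U ∧ l.get ⟨n, hn⟩ ∉ Set.range γ₁ ∧
        l.get ⟨n, hn⟩ ∉ Set.range γ₂) → n ≤ m →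
      toR2 (l.get ⟨m, hm⟩) ∈ U ∧ l.get ⟨m, hm⟩ ∉ Set.range γ₁ ∧
        l.get ⟨m, hm⟩ ∉ Set.range γ₂ := by
  obtain ⟨a, b, -, -, -, -, x, -, -, rfl⟩ := hU
  rw [← h10] at hl
  obtain ⟨s, t, rfl, hs, ht⟩ :=
    hl.exists_append_mem_range_not_mem_range hω.1 h1 h2 (h10.trans h20.symm)
  set F := traceFrom γ₁ a ∪ traceFrom γ₂ b
  have htF : ∀ v ∈ t, toR2 v ∈ Fᶜ := fun v hv =>
    toR2_mem_compl_traceFrom_union h1.1 h2.1 a b (ht v hv).1 (ht v hv).2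
  have htK : ∀ v ∈ t, ∀ w ∈ t,
      connectedComponentIn Fᶜ (toR2 v) = connectedComponentIn Fᶜ (toR2 w) :=
    fun v hv w hw => connectedComponentIn_eq_of_isChain h1.1 h2.1 a b
      (hl.1.2.1.infix (List.suffix_append s t).isInfix) ht hv hw
  have htU : ∀ v ∈ t, toR2 v ∈ connectedComponentIn Fᶜ x := by
    obtain ⟨z, hz, hzU, hz₁, hz₂⟩ := hz
    have hzt : z ∈ t := (List.mem_append.mp hz).resolve_left fun h => (hs z h).elim hz₁ hz₂
    intro v hv
    rw [connectedComponentIn_eq (hzU.resolve_left (htF z hzt)), htK z hzt v hv]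
    exact mem_connectedComponentIn (htF v hv)
  refine ⟨fun p hp => ?_, fun n m hn hm hnU hnm => ?_⟩
  · rcases List.mem_append.mp hp with hp | hp
    exacts [Or.inr (hs p hp), Or.inl (Or.inr (htU p hp))]
  · have hsn : s.length ≤ n := not_lt.mp fun h => by
      rw [List.get_eq_getElem, List.getElem_append_left h] at hnU
      exact (hs _ (List.getElem_mem h)).elim hnU.2.1 hnU.2.2
    have hmt : (s ++ t)[m] ∈ t := by
      rw [List.getElem_append_right (by omega)]
      exact List.getElem_mem _
    exact ⟨Or.inr (htU _ hmt), ht _ hmt⟩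

/-- **Lemma (`geobetween`).** On `𝒳`, if `g₁ ≺ g₂` eventually move into `H_i` and `U` is the
region between them, then any finite geodesic from `0` containing a vertex strictly inside
`U` stays in `U ∪ g₁ ∪ g₂`, and all its vertices from that point onward lie strictly
inside `U`. -/
theorem finite_geodesic_trapped_in_region (mu : ℝ × ℝ → ℝ) (hmu : IsNorm2 mu)
    (C : Set (ℝ × ℝ)) (hCcpt : IsCompact C) (hC : ∀ ρ ∈ C, IsSupporting mu ρ)
    (ω : Omega1) (hω : ω ∈ Xevent mu C) (i : ℤ) (γ₁ γ₂ : ℕ → V)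
    (h1 : IsInfGeo ω γ₁) (h10 : γ₁ 0 = 0) (h2 : IsInfGeo ω γ₂) (h20 : γ₂ 0 = 0)
    (hm1 : MovesInto γ₁ (Hp i)) (hm2 : MovesInto γ₂ (Hp i)) (hprec : PrecIn i γ₁ γ₂)
    (U : Set (ℝ × ℝ)) (hU : IsRegionBetween i γ₁ γ₂ U)
    (y : V) (l : List V) (hl : IsGeo ω l 0 y)
    (hz : ∃ p ∈ l, toR2 p ∈ U ∧ p ∉ Set.range γ₁ ∧ p ∉ Set.range γ₂) :
    (∀ p ∈ l, toR2 p ∈ U ∨ p ∈ Set.range γ₁ ∨ p ∈ Set.range γ₂) ∧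
    ∀ (n m : ℕ) (hn : n < l.length) (hm : m < l.length),
      (toR2 (l.get ⟨n, hn⟩) ∈ U ∧ l.get ⟨n, hn⟩ ∉ Set.range γ₁ ∧
        l.get ⟨n, hn⟩ ∉ Set.range γ₂) → n ≤ m →
      toR2 (l.get ⟨m, hm⟩) ∈ U ∧ l.get ⟨m, hm⟩ ∉ Set.range γ₁ ∧
        l.get ⟨m, hm⟩ ∉ Set.range γ₂ :=
  finite_geodesic_trapped_in_region_general mu C ω hω i γ₁ γ₂ h1 h10 h2 h20 U hU y l hl hz
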